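/- Let a = diag(i a_1, …, i a_n) with a_1, …, a_n distinct real numbers, let m ≥ 1 be an integer, and set b := i^{m−1} a^m (a diagonal skew-Hermitian matrix commuting with a). Define T on n×n matrices with zero diagonal by T = ad(b)∘ad(a)⁻¹, i.e. (T(u))_{jk} = ((b_j − b_k)/(a_j − a_k)) u_{jk} entrywise for j ≠ k (where b = diag(i b_1,…, i b_n)) and (T(u))_{jj} = 0. Let g : ℝ² → U(n) be smooth with u := g⁻¹ ∂_x g taking values in the skew-Hermitian matrices with zero diagonal and g⁻¹ ∂_t g = T(u). Then γ := g a g⁻¹ satisfies ∂_t γ = i^{m−1} ∂_x (γ^m). -/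

import Mathlib

open Matrix
open scoped ContDiff

attribute [local instance] Matrix.frobeniusNormedAddCommGroup Matrix.frobeniusNormedSpace

attribute [local instance] Matrix.frobeniusNormedRing Matrix.frobeniusNormedAlgebra

private lemma conj_pow_aux {n : ℕ} (g a : Matrix (Fin n) (Fin n) ℂ)
    (h1 : star g * g = 1) (m : ℕ) :
    (g * a * star g) ^ m = g * a ^ m * star g ∨ m = 0 := by
  induction m with
  | zero => exact Or.inr rfl
  | succ k ih =>
    left
    rcases ih with ih | rfl
    · rw [pow_succ, pow_succ, ih]
      have e1 : g * a ^ k * star g * (g * a * star g)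
          = g * a ^ k * (star g * g) * (a * star g) := by noncomm_ring
      rw [e1, h1, mul_one]
      noncomm_ring
    · simp

/-- Let `a = diag(i a₁, …, i aₙ)` with `a₁, …, aₙ` distinct reals, `m ≥ 1`, and
`b := i^{m−1} a^m = diag(i b₁, …, i bₙ)` with `b_j = (−1)^{m−1} a_j^m`.  Let `T` be
`ad(b)∘ad(a)⁻¹`, `(T u)_{jk} = ((b_j − b_k)/(a_j − a_k)) u_{jk}` for `j ≠ k`,
`(T u)_{jj} = 0`.  If `g : ℝ² → U(n)` is smooth with `u := g⁻¹ ∂ₓ g` valued in the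
skew-Hermitian matrices with zero diagonal and `g⁻¹ ∂ₜ g = T(u)`, then `γ := g a g⁻¹`
satisfies `∂ₜ γ = i^{m−1} ∂ₓ (γ^m)`. -/
theorem stmt_10 (n : ℕ) (av : Fin n → ℝ) (hav : Function.Injective av)
    (m : ℕ) (hm : 1 ≤ m)
    (a : Matrix (Fin n) (Fin n) ℂ)
    (ha : a = Matrix.diagonal fun j => Complex.I * (av j : ℂ))
    (bv : Fin n → ℝ)
    (hb : (Matrix.diagonal fun j => Complex.I * (bv j : ℂ)) = Complex.I ^ (m - 1) • a ^ m)
    (g : ℝ → ℝ → Matrix (Fin n) (Fin n) ℂ)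
    (hg : ContDiff ℝ ∞ (Function.uncurry g))
    (hgu : ∀ x t : ℝ, g x t ∈ Matrix.unitaryGroup (Fin n) ℂ)
    (u : ℝ → ℝ → Matrix (Fin n) (Fin n) ℂ)
    (hu_def : ∀ x t : ℝ, u x t = star (g x t) * deriv (fun s => g s t) x)
    (hu_skew : ∀ x t : ℝ, star (u x t) = -(u x t))
    (hu_diag : ∀ x t : ℝ, ∀ j : Fin n, u x t j j = 0)
    (hgt : ∀ x t : ℝ,
      star (g x t) * deriv (fun s => g x s) t
        = Matrix.of fun j k =>
            if j = k then 0 else (((bv j - bv k) / (av j - av k) : ℝ) : ℂ) * u x t j k) :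
    ∀ x t : ℝ,
      deriv (fun s => g x s * a * star (g x s)) t
        = Complex.I ^ (m - 1) • deriv (fun s => (g s t * a * star (g s t)) ^ m) x := by
  intro x t
  have hdiff : Differentiable ℝ (Function.uncurry g) := hg.differentiable (by norm_num)
  have h1 : star (g x t) * g x t = 1 := (hgu x t).1
  have h2 : g x t * star (g x t) = 1 := (hgu x t).2
  have hdx : HasDerivAt (fun s => g s t) (deriv (fun s => g s t) x) x :=
    ((hdiff.comp (by fun_prop : Differentiable ℝ fun s : ℝ => (s, t))) x).hasDerivAt
  have hdt : HasDerivAt (fun s => g x s) (deriv (fun s => g x s) t) t :=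
    ((hdiff.comp (by fun_prop : Differentiable ℝ fun s : ℝ => (x, s))) t).hasDerivAt
  let gx := deriv (fun s => g s t) x
  let gt := deriv (fun s => g x s) t
  let Tm : Matrix (Fin n) (Fin n) ℂ :=
    Matrix.of fun j k =>
      if j = k then 0 else (((bv j - bv k) / (av j - av k) : ℝ) : ℂ) * u x t j k
  have hTm : Tm = Matrix.of fun j k =>
      if j = k then 0 else (((bv j - bv k) / (av j - av k) : ℝ) : ℂ) * u x t j k := rfl
  have hgx_eq : gx = g x t * u x t := by
    show deriv (fun s => g s t) x = _
    rw [hu_def x t, ← mul_assoc, h2, one_mul]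
  have hgt_eq : gt = g x t * Tm := by
    show deriv (fun s => g x s) t = _
    rw [hTm, ← hgt x t, ← mul_assoc, h2, one_mul]
  have hustar : star (u x t) = -(u x t) := hu_skew x t
  have hustar' : ∀ j k, star (u x t k j) = -(u x t j k) := by
    intro j k
    have := congrFun (congrFun hustar j) k
    simpa [Matrix.star_apply] using this
  have hTstar : star Tm = -Tm := by
    ext j k
    rw [Matrix.star_apply, hTm]
    simp only [Matrix.of_apply, Matrix.neg_apply]
    by_cases hjk : j = k
    · subst hjk; simp
    · have hkj : ¬ k = j := fun h => hjk h.symm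
      rw [if_neg hkj, if_neg hjk, star_mul']
      have hc : ((bv k - bv j) / (av k - av j) : ℝ) = (bv j - bv k) / (av j - av k) := by
        rw [← neg_sub (bv j), ← neg_sub (av j), neg_div_neg_eq]
      have hs1 : star ((((bv k - bv j) / (av k - av j) : ℝ)) : ℂ)
          = (((bv j - bv k) / (av j - av k) : ℝ) : ℂ) := by
        rw [Complex.star_def, Complex.conj_ofReal, hc]
      rw [hs1, hustar' j k]
      ring
  have HL : HasDerivAt (fun s => g x s * a * star (g x s))
      (gt * a * star (g x t) + g x t * a * star gt) t :=
    (hdt.mul_const a).mul hdt.star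
  have hfun : (fun s => (g s t * a * star (g s t)) ^ m)
      = fun s => g s t * a ^ m * star (g s t) := by
    funext s
    rcases conj_pow_aux (g s t) a (hgu s t).1 m with h | h
    · exact h
    · omega
  have HR : HasDerivAt (fun s => (g s t * a * star (g s t)) ^ m)
      (gx * a ^ m * star (g x t) + g x t * a ^ m * star gx) x := by
    rw [hfun]
    exact (hdx.mul_const (a ^ m)).mul hdx.star
  rw [show deriv (fun s => g x s * a * star (g x s)) t = _ from HL.deriv,
    show deriv (fun s => (g s t * a * star (g s t)) ^ m) x = _ from HR.deriv, hgx_eq, hgt_eq, Matrix.star_mul, Matrix.star_mul, hustar, hTstar]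
  have key : Tm * a - a * Tm = u x t * (Complex.I ^ (m - 1) • a ^ m)
      - (Complex.I ^ (m - 1) • a ^ m) * u x t := by
    rw [← hb, ha, hTm]
    ext j k
    by_cases hjk : j = k
    · subst hjk
      simp [Matrix.mul_diagonal, Matrix.diagonal_mul, hu_diag x t j]
    · have hane : (av j : ℂ) - (av k : ℂ) ≠ 0 := by
        intro h
        exact hjk (hav (by exact_mod_cast sub_eq_zero.mp h))
      simp only [Matrix.sub_apply, Matrix.mul_diagonal, Matrix.diagonal_mul,
        Matrix.of_apply, if_neg hjk]
      push_cast
      field_simp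
      ring
  have LHSeq : g x t * Tm * a * star (g x t) + g x t * a * (-Tm * star (g x t))
      = g x t * (Tm * a - a * Tm) * star (g x t) := by noncomm_ring
  have RHSeq : g x t * u x t * a ^ m * star (g x t)
        + g x t * a ^ m * (-(u x t) * star (g x t))
      = g x t * (u x t * a ^ m - a ^ m * u x t) * star (g x t) := by noncomm_ring
  rw [LHSeq, RHSeq, key]
  simp only [mul_sub, sub_mul, mul_smul_comm, smul_mul_assoc, smul_sub]
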